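/- arXiv:2402.12290 — 3 statements merged into one kernel-verified Lean document; each statement's English description precedes it below -/
import Mathlib

section
/- Let (X, d) be a metric space and ρ : X × X → ℝ a function such that for every y ∈ X, the function x ↦ ρ(x, y) is uniquely minimized at x = y (honesty). Let P be a probability measure on X with Fréchet ρ-function F_P(x) = E_{Y∼P}[ρ(x,Y)], and suppose the minimizer set M(P) = argmin F_P is nonempty. Then for every t ∈ (0,1] and every x ∈ M(P), the perturbed measure P_{x,t} = (1−t)P + t δ_x has a unique Fréchet ρ-mean, namely M(P_{x,t}) = {x}. -/
/-!
On the perturbed measure the Fréchet function splits as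
`F_Q z = (1 - t) F_P z + t ρ(z, x)`. The first summand is minimised at `x` because `x` is a
Fréchet mean of `P`, and by honesty the second is minimised at `x` and nowhere else, so their
sum has `x` as its only minimiser.
-/

open MeasureTheory NNReal

theorem integral_smul_add_smul_dirac {α : Type*} [MeasurableSpace α] [MeasurableSingletonClass α]
    {μ : Measure α} {f : α → ℝ} (hf : Integrable f μ) (a b : ℝ≥0) (x : α) :
    ∫ y, f y ∂(a • μ + b • Measure.dirac x) = a * ∫ y, f y ∂μ + b * f x := by
  have hdirac : Integrable f (b • Measure.dirac x) :=
    (integrable_dirac enorm_lt_top).smul_measure_nnreal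
  rw [integral_add_measure hf.smul_measure_nnreal hdirac, integral_smul_nnreal_measure,
    integral_smul_nnreal_measure, integral_dirac, NNReal.smul_def, NNReal.smul_def, smul_eq_mul,
    smul_eq_mul]

theorem setOf_forall_add_le_eq_singleton {α β : Type*} [AddCommMonoid β] [LinearOrder β]
    [IsOrderedCancelAddMonoid β] {f g : α → β} {x : α} (hf : ∀ z, f x ≤ f z)
    (hg : ∀ z, z ≠ x → g x < g z) :
    {z | ∀ z', f z + g z ≤ f z' + g z'} = {x} := by
  ext z
  refine ⟨fun hz => by_contra fun hzx => ?_, ?_⟩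
  · exact (hz x).not_gt (add_lt_add_of_le_of_lt (hf z) (hg z hzx))
  · rintro rfl z'
    obtain rfl | hz' := eq_or_ne z' z
    · exact le_rfl
    · exact add_le_add (hf z') (hg z' hz').le

theorem frechet_mean_perturbed_unique_general
    {X : Type*} [MetricSpace X] [MeasurableSpace X] [BorelSpace X]
    (ρ : X → X → ℝ)
    (honest : ∀ x y : X, y ≠ x → ρ x x < ρ y x)
    (P : Measure X)
    (hint : ∀ x : X, Integrable (fun y => ρ x y) P)
    (t : ℝ) (ht0 : 0 < t)
    (x : X) (hx : x ∈ {x : X | ∀ x', ∫ y, ρ x y ∂P ≤ ∫ y, ρ x' y ∂P})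
    (Q : Measure X)
    (hQ : Q = Real.toNNReal (1 - t) • P + Real.toNNReal t • Measure.dirac x) :
    {z : X | ∀ z', ∫ y, ρ z y ∂Q ≤ ∫ y, ρ z' y ∂Q} = {x} := by
  simp only [hQ, integral_smul_add_smul_dirac (hint _)]
  refine setOf_forall_add_le_eq_singleton (fun z => ?_) (fun z hzx => ?_)
  · exact mul_le_mul_of_nonneg_left (hx z) (Real.toNNReal (1 - t)).coe_nonneg
  · exact mul_lt_mul_of_pos_left (honest x z hzx) (by simpa using ht0)

/-- Instability of non-uniqueness: perturbing `P` by a Dirac mass at one of its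
Fréchet `ρ`-means makes that point the unique Fréchet `ρ`-mean. -/
theorem frechet_mean_perturbed_unique
    {X : Type*} [MetricSpace X] [MeasurableSpace X] [BorelSpace X]
    (ρ : X → X → ℝ) (hρmeas : Measurable fun p : X × X => ρ p.1 p.2)
    (honest : ∀ x y : X, y ≠ x → ρ x x < ρ y x)
    (P : Measure X) [IsProbabilityMeasure P]
    (hint : ∀ x : X, Integrable (fun y => ρ x y) P)
    (hne : {x : X | ∀ x', ∫ y, ρ x y ∂P ≤ ∫ y, ρ x' y ∂P}.Nonempty)
    (t : ℝ) (ht0 : 0 < t) (ht1 : t ≤ 1)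
    (x : X) (hx : x ∈ {x : X | ∀ x', ∫ y, ρ x y ∂P ≤ ∫ y, ρ x' y ∂P})
    (Q : Measure X)
    (hQ : Q = Real.toNNReal (1 - t) • P + Real.toNNReal t • Measure.dirac x) :
    {z : X | ∀ z', ∫ y, ρ z y ∂Q ≤ ∫ y, ρ z' y ∂Q} = {x} :=
  frechet_mean_perturbed_unique_general ρ honest P hint t ht0 x hx Q hQ
end

section
/- Let (X, d) be a metric space, ρ honest, and P a probability measure whose Fréchet ρ-mean set M(P) is nonempty and contains at least two distinct points x, y. Then for every t ∈ (0,1], the perturbed measures P_{x,t} = (1−t)P + tδ_x and P_{y,t} = (1−t)P + tδ_y have unique Fréchet means located at x and y respectively, and the distance between these means satisfies d(x, y) > 0; moreover the total variation distance satisfies TV(P_{x,t}, P_{y,t}) ≤ 2t. -/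
open MeasureTheory
open scoped ENNReal NNReal

lemma frechet_aux_integrable_dirac {X : Type*} [MeasurableSpace X]
    [MeasurableSingletonClass X] (f : X → ℝ) (a : X) :
    Integrable f (Measure.dirac a) :=
  (integrable_const (f a)).congr (ae_eq_dirac f).symm

lemma frechet_aux_integral {X : Type*} [MetricSpace X] [MeasurableSpace X] [BorelSpace X]
    (ρ : X → X → ℝ) (P : Measure X) [IsProbabilityMeasure P]
    (hint : ∀ x : X, Integrable (fun y => ρ x y) P)
    (x : X) (t : ℝ) (ht0 : 0 < t) (ht1 : t ≤ 1) (z : X) :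
    ∫ w, ρ z w ∂(Real.toNNReal (1 - t) • P + Real.toNNReal t • Measure.dirac x)
      = (1 - t) * ∫ w, ρ z w ∂P + t * ρ z x := by
  have h1 : ((Real.toNNReal (1 - t) : ℝ≥0∞)) ≠ ⊤ := ENNReal.coe_ne_top
  have h2 : ((Real.toNNReal t : ℝ≥0∞)) ≠ ⊤ := ENNReal.coe_ne_top
  have hiP : Integrable (fun w => ρ z w) ((Real.toNNReal (1 - t) : ℝ≥0∞) • P) :=
    (hint z).smul_measure h1
  have hiD : Integrable (fun w => ρ z w) ((Real.toNNReal t : ℝ≥0∞) • Measure.dirac x) :=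
    (frechet_aux_integrable_dirac (fun w => ρ z w) x).smul_measure h2
  have : (Real.toNNReal (1 - t) • P + Real.toNNReal t • Measure.dirac x : Measure X)
      = (Real.toNNReal (1 - t) : ℝ≥0∞) • P + (Real.toNNReal t : ℝ≥0∞) • Measure.dirac x := rfl
  rw [this, integral_add_measure hiP hiD, integral_smul_measure, integral_smul_measure,
    integral_dirac]
  have e1 : ((Real.toNNReal (1 - t) : ℝ≥0∞)).toReal = 1 - t := by
    simp [Real.toNNReal_of_nonneg (by linarith : (0:ℝ) ≤ 1 - t)]
  have e2 : ((Real.toNNReal t : ℝ≥0∞)).toReal = t := by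
    simp [Real.toNNReal_of_nonneg ht0.le]
  rw [e1, e2]; simp only [smul_eq_mul]; try ring

lemma frechet_aux_unique {X : Type*} [MetricSpace X] [MeasurableSpace X] [BorelSpace X]
    (ρ : X → X → ℝ)
    (honest : ∀ x y : X, y ≠ x → ρ x x < ρ y x)
    (P : Measure X) [IsProbabilityMeasure P]
    (hint : ∀ x : X, Integrable (fun y => ρ x y) P)
    (x : X)
    (hx : x ∈ {z : X | ∀ z', ∫ w, ρ z w ∂P ≤ ∫ w, ρ z' w ∂P})
    (t : ℝ) (ht0 : 0 < t) (ht1 : t ≤ 1)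
    (Qx : Measure X)
    (hQx : Qx = Real.toNNReal (1 - t) • P + Real.toNNReal t • Measure.dirac x) :
    {z : X | ∀ z', ∫ w, ρ z w ∂Qx ≤ ∫ w, ρ z' w ∂Qx} = {x} := by
  have key : ∀ z, ∫ w, ρ z w ∂Qx = (1 - t) * ∫ w, ρ z w ∂P + t * ρ z x := by
    intro z; rw [hQx]; exact frechet_aux_integral ρ P hint x t ht0 ht1 z
  ext z
  simp only [Set.mem_setOf_eq, Set.mem_singleton_iff]
  constructor
  · intro hz
    by_contra hne
    have h := hz x
    rw [key z, key x] at h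
    have h1 : ∫ w, ρ x w ∂P ≤ ∫ w, ρ z w ∂P := hx z
    have h2 : ρ x x < ρ z x := honest x z hne
    nlinarith [mul_le_mul_of_nonneg_left h1 (by linarith : (0:ℝ) ≤ 1 - t)]
  · rintro rfl z'
    rw [key z, key z']
    have h1 : ∫ w, ρ z w ∂P ≤ ∫ w, ρ z' w ∂P := hx z'
    have h2 : ρ z z ≤ ρ z' z := by
      rcases eq_or_ne z' z with rfl | hne
      · exact le_rfl
      · exact (honest z z' hne).le
    have g1 := mul_le_mul_of_nonneg_left h1 (by linarith : (0:ℝ) ≤ 1 - t)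
    have g2 := mul_le_mul_of_nonneg_left h2 ht0.le
    linarith

/-- Two perturbed measures at two distinct Fréchet means: each has a unique mean
(at the respective perturbation point), the means are at positive distance, and
the total variation distance between the perturbed measures is at most `2t`. -/
theorem frechet_two_point_perturbation
    {X : Type*} [MetricSpace X] [MeasurableSpace X] [BorelSpace X]
    (ρ : X → X → ℝ) (hρmeas : Measurable fun p : X × X => ρ p.1 p.2)
    (honest : ∀ x y : X, y ≠ x → ρ x x < ρ y x)
    (P : Measure X) [IsProbabilityMeasure P]
    (hint : ∀ x : X, Integrable (fun y => ρ x y) P)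
    (x y : X) (hxy : x ≠ y)
    (hx : x ∈ {z : X | ∀ z', ∫ w, ρ z w ∂P ≤ ∫ w, ρ z' w ∂P})
    (hy : y ∈ {z : X | ∀ z', ∫ w, ρ z w ∂P ≤ ∫ w, ρ z' w ∂P})
    (t : ℝ) (ht0 : 0 < t) (ht1 : t ≤ 1)
    (Qx Qy : Measure X)
    (hQx : Qx = Real.toNNReal (1 - t) • P + Real.toNNReal t • Measure.dirac x)
    (hQy : Qy = Real.toNNReal (1 - t) • P + Real.toNNReal t • Measure.dirac y) :
    {z : X | ∀ z', ∫ w, ρ z w ∂Qx ≤ ∫ w, ρ z' w ∂Qx} = {x} ∧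
    {z : X | ∀ z', ∫ w, ρ z w ∂Qy ≤ ∫ w, ρ z' w ∂Qy} = {y} ∧
    0 < dist x y ∧
    sSup {r : ℝ | ∃ A : Set X, MeasurableSet A ∧ r = |(Qx A).toReal - (Qy A).toReal|}
      ≤ 2 * t := by
  refine ⟨frechet_aux_unique ρ honest P hint x hx t ht0 ht1 Qx hQx,
    frechet_aux_unique ρ honest P hint y hy t ht0 ht1 Qy hQy,
    dist_pos.mpr hxy, ?_⟩
  apply Real.sSup_le
  · rintro r ⟨A, hA, rfl⟩
    have hco : ((Real.toNNReal (1 - t) : ℝ≥0∞)) ≠ ⊤ := ENNReal.coe_ne_top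
    have hQxA : (Qx A).toReal
        = (1 - t) * (P A).toReal + t * ((Measure.dirac x) A).toReal := by
      rw [hQx]
      have : ((Real.toNNReal (1 - t) • P + Real.toNNReal t • Measure.dirac x : Measure X)) A
          = (Real.toNNReal (1 - t) : ℝ≥0∞) * P A
            + (Real.toNNReal t : ℝ≥0∞) * (Measure.dirac x) A := by
        simp only [Measure.add_apply, Measure.smul_apply, smul_eq_mul, ENNReal.smul_def]
      rw [this, ENNReal.toReal_add, ENNReal.toReal_mul, ENNReal.toReal_mul]
      · simp [Real.toNNReal_of_nonneg (by linarith : (0:ℝ) ≤ 1 - t),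
          Real.toNNReal_of_nonneg ht0.le]
      · exact ENNReal.mul_ne_top ENNReal.coe_ne_top (measure_ne_top _ _)
      · exact ENNReal.mul_ne_top ENNReal.coe_ne_top (measure_ne_top _ _)
    have hQyA : (Qy A).toReal
        = (1 - t) * (P A).toReal + t * ((Measure.dirac y) A).toReal := by
      rw [hQy]
      have : ((Real.toNNReal (1 - t) • P + Real.toNNReal t • Measure.dirac y : Measure X)) A
          = (Real.toNNReal (1 - t) : ℝ≥0∞) * P A
            + (Real.toNNReal t : ℝ≥0∞) * (Measure.dirac y) A := by
        simp only [Measure.add_apply, Measure.smul_apply, smul_eq_mul, ENNReal.smul_def]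
      rw [this, ENNReal.toReal_add, ENNReal.toReal_mul, ENNReal.toReal_mul]
      · simp [Real.toNNReal_of_nonneg (by linarith : (0:ℝ) ≤ 1 - t),
          Real.toNNReal_of_nonneg ht0.le]
      · exact ENNReal.mul_ne_top ENNReal.coe_ne_top (measure_ne_top _ _)
      · exact ENNReal.mul_ne_top ENNReal.coe_ne_top (measure_ne_top _ _)
    rw [hQxA, hQyA]
    have hdx : ((Measure.dirac x) A).toReal = 0 ∨ ((Measure.dirac x) A).toReal = 1 := by
      rw [Measure.dirac_apply' x hA]
      by_cases h : x ∈ A <;> simp [Set.indicator, h]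
    have hdy : ((Measure.dirac y) A).toReal = 0 ∨ ((Measure.dirac y) A).toReal = 1 := by
      rw [Measure.dirac_apply' y hA]
      by_cases h : y ∈ A <;> simp [Set.indicator, h]
    rcases hdx with h1 | h1 <;> rcases hdy with h2 | h2 <;>
      rw [h1, h2] <;> rw [abs_le] <;> constructor <;> nlinarith
  · linarith
end

section
/- In ℝ², let A = (0,1), E = (−1/2, 1/2). Suppose φ : ℝ² → ℝ is differentiable, α-strongly convex and β-smooth with 0 ≤ α < β, and satisfies ∇φ(E) = A and ∇φ(−E) = −A. Then β − α ≥ 2, and if α > 0 then β − α > 2. -/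
set_option maxHeartbeats 1000000 in
/-- Interpolation obstruction in `ℝ²`: if an `α`-strongly convex, `β`-smooth `φ`
has `∇φ(E) = A` and `∇φ(-E) = -A` with `A = (0,1)`, `E = (-1/2, 1/2)`, then
`β - α ≥ 2`, and `β - α > 2` whenever `α > 0`. -/
theorem wasserstein_gradient_interpolation_obstruction
    (A E : EuclideanSpace ℝ (Fin 2))
    (hA : A = (WithLp.equiv 2 (Fin 2 → ℝ)).symm ![0, 1])
    (hE : E = (WithLp.equiv 2 (Fin 2 → ℝ)).symm ![-(1/2 : ℝ), 1/2])
    (φ : EuclideanSpace ℝ (Fin 2) → ℝ) (hdiff : Differentiable ℝ φ)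
    (α β : ℝ) (hα : 0 ≤ α) (hαβ : α < β)
    (hsc : ∀ x y : EuclideanSpace ℝ (Fin 2),
      φ x - φ y + α/2 * ‖x - y‖^2 ≤ (inner ℝ (gradient φ x) (x - y) : ℝ))
    (hsm : ∀ x y : EuclideanSpace ℝ (Fin 2),
      (inner ℝ (gradient φ x) (x - y) : ℝ) ≤ φ x - φ y + β/2 * ‖x - y‖^2)
    (hgE : gradient φ E = A) (hgE' : gradient φ (-E) = -A) :
    2 ≤ β - α ∧ (0 < α → 2 < β - α) := by
  have inner2 : ∀ x y : EuclideanSpace ℝ (Fin 2), (inner ℝ x y : ℝ) = x 0 * y 0 + x 1 * y 1 := by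
    intro x y
    simp [PiLp.inner_apply, Fin.sum_univ_two, RCLike.inner_apply]; ring
  have norm2 : ∀ x : EuclideanSpace ℝ (Fin 2), ‖x‖^2 = (x 0)^2 + (x 1)^2 := by
    intro x
    rw [← real_inner_self_eq_norm_sq, inner2]; ring
  have γpos : 0 < β - α := sub_pos.mpr hαβ
  have γne : β - α ≠ 0 := ne_of_gt γpos
  set z : EuclideanSpace ℝ (Fin 2) :=
    (WithLp.equiv 2 (Fin 2 → ℝ)).symm ![(α+β)/(2*(β-α)), (4-α-β)/(2*(β-α))] with hz
  have h1 := hsc E z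
  have h2 := hsm (-E) z
  have h3 := hsc (-E) (-z)
  have h4 := hsm E (-z)
  rw [hgE] at h1 h4
  rw [hgE'] at h2 h3
  rw [inner2, norm2] at h1 h2 h3 h4
  simp only [hA, hE, hz] at h1 h2 h3 h4
  simp only [PiLp.sub_apply, PiLp.neg_apply, WithLp.equiv_symm_apply, PiLp.toLp_apply,
    Matrix.cons_val_zero, Matrix.cons_val_one, Matrix.head_cons] at h1 h2 h3 h4
  have key : 0 ≤ α + β - 2 - α*β := by
    have comb : (0:ℝ) ≤
        -4 * ((4-α-β)/(2*(β-α)))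
        - α * (((α+β)/(2*(β-α)) + 1/2)^2 + ((4-α-β)/(2*(β-α)) - 1/2)^2)
        + β * (((α+β)/(2*(β-α)) - 1/2)^2 + ((4-α-β)/(2*(β-α)) + 1/2)^2) := by
      ring_nf at h1 h2 h3 h4 ⊢
      linarith [h1, h2, h3, h4]
    have comb2 : (0:ℝ) ≤ (β-α)^2 *
        (-4 * ((4-α-β)/(2*(β-α)))
        - α * (((α+β)/(2*(β-α)) + 1/2)^2 + ((4-α-β)/(2*(β-α)) - 1/2)^2)
        + β * (((α+β)/(2*(β-α)) - 1/2)^2 + ((4-α-β)/(2*(β-α)) + 1/2)^2)) :=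
      mul_nonneg (by positivity) comb
    have expand : (β-α)^2 *
        (-4 * ((4-α-β)/(2*(β-α)))
        - α * (((α+β)/(2*(β-α)) + 1/2)^2 + ((4-α-β)/(2*(β-α)) - 1/2)^2)
        + β * (((α+β)/(2*(β-α)) - 1/2)^2 + ((4-α-β)/(2*(β-α)) + 1/2)^2))
        = 2*(β-α)*(α + β - 2 - α*β) := by
      field_simp
      ring
    rw [expand] at comb2
    nlinarith [comb2, γpos]
  clear h1 h2 h3 h4 hz hsc hsm inner2 norm2 hgE hgE' hdiff hA hE
  have hα1 : α < 1 := by nlinarith [key, sq_nonneg (α-1), γpos]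
  constructor
  · nlinarith [key, sq_nonneg α, hα1]
  · intro hα0
    nlinarith [key, hα1, mul_pos hα0 hα0]
end
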